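/- arXiv:1602.04952 — 2 statements merged into one kernel-verified Lean document; each statement's English description precedes it below -/
import Mathlib

section
/- Let k ≥ 2 be an integer. For every t ≥ 0, the column integral of OPT_k satisfies ∫₀¹ (1 − OPT_k(x,t)) dx = min(t, 1); in particular OPT_k satisfies the column requirement ∫₀¹ (1 − OPT_k(x,t)) dx ≤ t for all t ≥ 0. -/
open MeasureTheory Set

/-- The optimal function `OPT_k : (0,1] × [0,∞) → [0,1]`:
`OPT_k(x,t) = 1` if `t ≤ x/k`; `(x/(kt))^{1/(k-1)}` if `x/k ≤ t ≤ 1/k`;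
`(k/(k-1))·(1-t)·x^{1/(k-1)}` if `1/k ≤ t ≤ 1`; and `0` if `t ≥ 1`.
(The branch values agree at the boundary points.) -/
noncomputable def OPTk (k : ℕ) (x t : ℝ) : ℝ :=
  if 1 ≤ t then 0
  else if 1 / (k:ℝ) ≤ t then ((k:ℝ) / ((k:ℝ) - 1)) * (1 - t) * x ^ ((1:ℝ) / ((k:ℝ) - 1))
  else if x / (k:ℝ) ≤ t then (x / ((k:ℝ) * t)) ^ ((1:ℝ) / ((k:ℝ) - 1))
  else 1

/-!
Write `p = 1/(k-1)`, so that `p + 1 = k/(k-1)`. For `1/k ≤ t < 1` the column is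
`(p+1)(1-t) x^p`, whose integral is `1 - t`. For `t < 1/k` put `c = k t ≤ 1`: the column is
`(x/c)^p` on `(0, c]` and `1` beyond, so `∫ (1 - OPT_k) = c - c/(p+1) = c p/(p+1) = t`.
-/

theorem integral_rpow_zero_one {p : ℝ} (hp : -1 < p) :
    ∫ x in (0:ℝ)..1, x ^ p = 1 / (p + 1) := by
  rw [integral_rpow (Or.inl hp), Real.one_rpow, Real.zero_rpow (by linarith), sub_zero]

theorem integral_one_sub_div_rpow {c p : ℝ} (hp : -1 < p) :
    ∫ x in (0:ℝ)..c, (1 - (x / c) ^ p) = c * p / (p + 1) := by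
  rcases eq_or_ne c 0 with rfl | hc
  · simp
  have hint : IntervalIntegrable (fun x => (x / c) ^ p) volume 0 c := by
    simpa [div_eq_mul_inv, hc] using
      (intervalIntegral.intervalIntegrable_rpow' hp (a := 0) (b := 1)).comp_mul_right (c := c⁻¹)
  rw [intervalIntegral.integral_sub intervalIntegrable_const hint,
    intervalIntegral.integral_comp_div (fun x => x ^ p) hc, zero_div, div_self hc,
    integral_rpow_zero_one hp, intervalIntegral.integral_const, smul_eq_mul, smul_eq_mul]
  have hp1 : p + 1 ≠ 0 := by linarith
  field_simp
  ring

theorem one_div_sub_one_add_one {a : ℝ} (ha : a ≠ 1) : 1 / (a - 1) + 1 = a / (a - 1) := by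
  have : a - 1 ≠ 0 := sub_ne_zero.2 ha
  field_simp
  ring

section OPTk

variable {k : ℕ} {x t : ℝ}

theorem OPTk_of_one_le (ht : 1 ≤ t) : OPTk k x t = 0 := if_pos ht

theorem OPTk_of_inv_le_of_lt_one (ht : 1 / (k:ℝ) ≤ t) (ht' : t < 1) :
    OPTk k x t = (k / (k - 1)) * (1 - t) * x ^ (1 / ((k:ℝ) - 1)) := by
  rw [OPTk, if_neg ht'.not_ge, if_pos ht]

theorem one_sub_OPTk_of_lt_inv (hk : 1 ≤ k) (ht : t < 1 / k) :
    1 - OPTk k x t =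
      (Iic (k * t)).indicator (fun y => 1 - (y / (k * t)) ^ (1 / ((k:ℝ) - 1))) x := by
  have hk0 : (0:ℝ) < k := by exact_mod_cast hk
  have ht1 : ¬ 1 ≤ t := fun h => ht.not_ge ((div_le_one hk0).2 (by exact_mod_cast hk) |>.trans h)
  rw [OPTk, if_neg ht1, if_neg ht.not_ge]
  by_cases hx : x ≤ k * t
  · rw [if_pos ((div_le_iff₀' hk0).2 hx), indicator_of_mem (mem_Iic.2 hx)]
  · rw [if_neg (fun h => hx ((div_le_iff₀' hk0).1 h)), indicator_of_notMem (by simpa using hx),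
      sub_self]

theorem setIntegral_one_sub_OPTk_of_one_le (ht : 1 ≤ t) :
    ∫ x in Ioc (0:ℝ) 1, (1 - OPTk k x t) = 1 := by
  simp [OPTk_of_one_le ht]

theorem setIntegral_one_sub_OPTk_of_inv_le_of_lt_one (hk : 1 < k) (ht : 1 / (k:ℝ) ≤ t)
    (ht' : t < 1) : ∫ x in Ioc (0:ℝ) 1, (1 - OPTk k x t) = t := by
  have hk1 : (1:ℝ) < k := by exact_mod_cast hk
  have hp : -1 < 1 / ((k:ℝ) - 1) := by linarith [one_div_pos.2 (sub_pos.2 hk1)]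
  simp_rw [OPTk_of_inv_le_of_lt_one ht ht']
  rw [← intervalIntegral.integral_of_le zero_le_one, intervalIntegral.integral_sub
    intervalIntegrable_const ((intervalIntegral.intervalIntegrable_rpow' hp).const_mul _),
    intervalIntegral.integral_const_mul, integral_rpow_zero_one hp, intervalIntegral.integral_const,
    smul_eq_mul]
  have hk1' : (k:ℝ) - 1 ≠ 0 := by linarith
  rw [one_div_sub_one_add_one hk1.ne']
  field_simp
  ring

theorem setIntegral_one_sub_OPTk_of_lt_inv (hk : 1 < k) (ht0 : 0 ≤ t) (ht : t < 1 / k) :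
    ∫ x in Ioc (0:ℝ) 1, (1 - OPTk k x t) = t := by
  have hk1 : (1:ℝ) < k := by exact_mod_cast hk
  have hkt : (k:ℝ) * t ≤ 1 := by
    rw [lt_div_iff₀ (by linarith)] at ht; linarith
  simp_rw [one_sub_OPTk_of_lt_inv hk.le ht]
  rw [setIntegral_indicator measurableSet_Iic, Ioc_inter_Iic, min_eq_right hkt,
    ← intervalIntegral.integral_of_le (by positivity), integral_one_sub_div_rpow
      (by linarith [one_div_pos.2 (sub_pos.2 hk1)])]
  have hk1' : (k:ℝ) - 1 ≠ 0 := by linarith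
  rw [one_div_sub_one_add_one hk1.ne']
  field_simp

end OPTk

/-- For `k ≥ 2` and every `t ≥ 0`, the column integral of `OPT_k` satisfies
`∫₀¹ (1 - OPT_k(x,t)) dx = min(t,1)`; in particular `OPT_k` satisfies the column
requirement `∫₀¹ (1 - OPT_k(x,t)) dx ≤ t`. -/
theorem column_OPT (k : ℕ) (hk : 2 ≤ k) (t : ℝ) (ht : 0 ≤ t) :
    (∫ x in Ioc (0:ℝ) 1, (1 - OPTk k x t)) = min t 1 ∧
    (∫ x in Ioc (0:ℝ) 1, (1 - OPTk k x t)) ≤ t := by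
  have key : (∫ x in Ioc (0:ℝ) 1, (1 - OPTk k x t)) = min t 1 := by
    rcases le_or_gt 1 t with h1 | h1
    · rw [setIntegral_one_sub_OPTk_of_one_le h1, min_eq_right h1]
    rw [min_eq_left h1.le]
    rcases le_or_gt (1 / (k:ℝ)) t with hkt | hkt
    · exact setIntegral_one_sub_OPTk_of_inv_le_of_lt_one hk hkt h1
    · exact setIntegral_one_sub_OPTk_of_lt_inv hk ht hkt
  exact ⟨key, key.trans_le (min_le_left t 1)⟩
end

section
/- For all integers k ≥ 2 and t ≥ a ≥ 1, the product ∏_{i=a}^{t} (1 − 1/(i·k − i + 1)) is at most (a/t)^{1/(k−1)}. -/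
/-!
Write `c = k - 1`, so the `i`-th factor is `1 - 1/(ic + 1) = (1 + 1/(ic))⁻¹`. Bernoulli's
inequality gives `(1 + 1/(ic))^c ≥ 1 + 1/i`, hence each factor is at most `(i/(i+1))^{1/c}`.
The product of the `i/(i+1)` telescopes to `a/(t+1) ≤ a/t`.
-/

open Finset

theorem one_add_inv_le_one_add_inv_mul_rpow {x c : ℝ} (hx : 0 < x) (hc : 1 ≤ c) :
    1 + x⁻¹ ≤ (1 + (x * c)⁻¹) ^ c := by
  have hs : -1 ≤ (x * c)⁻¹ := by linarith [inv_pos.mpr (by positivity : 0 < x * c)]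
  have hbernoulli := one_add_mul_self_le_rpow_one_add hs hc
  rwa [show c * (x * c)⁻¹ = x⁻¹ by field_simp] at hbernoulli

theorem one_sub_inv_mul_add_one_le_rpow {x c : ℝ} (hx : 0 ≤ x) (hc : 1 ≤ c) :
    1 - (x * c + 1)⁻¹ ≤ (x / (x + 1)) ^ c⁻¹ := by
  rcases hx.eq_or_lt with rfl | hx
  · simpa using Real.rpow_nonneg le_rfl c⁻¹
  have hfactor : 1 - (x * c + 1)⁻¹ = (1 + (x * c)⁻¹)⁻¹ := by field_simp; ring
  have hratio : x / (x + 1) = (1 + x⁻¹)⁻¹ := by field_simp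
  rw [hfactor, hratio, Real.inv_rpow (by positivity)]
  refine inv_anti₀ (by positivity) ?_
  rw [Real.rpow_inv_le_iff_of_pos (by positivity) (by positivity) (by linarith)]
  exact one_add_inv_le_one_add_inv_mul_rpow hx hc

theorem prod_Icc_div_add_one {a t : ℕ} (hat : a ≤ t) :
    ∏ i ∈ Icc a t, ((i : ℝ) / (i + 1)) = a / (t + 1) := by
  induction t, hat using Nat.le_induction with
  | base => simp
  | succ t hat ih =>
    rw [prod_Icc_succ_top (by omega), ih]
    push_cast
    field_simp

theorem div_add_one_le_div {a t : ℕ} (hat : a ≤ t) : (a : ℝ) / (t + 1) ≤ a / t := by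
  rcases Nat.eq_zero_or_pos t with rfl | ht
  · simp [Nat.le_zero.mp hat]
  exact div_le_div_of_nonneg_left (by positivity) (by positivity) (by linarith)

theorem prod_unchecked_le_general (k a t : ℕ) (hk : 2 ≤ k) (hat : a ≤ t) :
    (∏ i ∈ Finset.Icc a t, (1 - 1 / ((i:ℝ) * (k:ℝ) - (i:ℝ) + 1))) ≤
      ((a:ℝ) / (t:ℝ)) ^ ((1:ℝ) / ((k:ℝ) - 1)) := by
  have hc : 1 ≤ (k : ℝ) - 1 := by
    have : (2 : ℝ) ≤ k := by exact_mod_cast hk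
    linarith
  have hfactor (i : ℕ) : (i : ℝ) * k - i + 1 = i * ((k : ℝ) - 1) + 1 := by ring
  simp only [one_div, hfactor]
  calc ∏ i ∈ Icc a t, (1 - ((i : ℝ) * ((k : ℝ) - 1) + 1)⁻¹)
      ≤ ∏ i ∈ Icc a t, ((i : ℝ) / (i + 1)) ^ ((k : ℝ) - 1)⁻¹ := by
        refine prod_le_prod (fun i _ => ?_) (fun i _ => ?_)
        · exact sub_nonneg.mpr (inv_le_one_of_one_le₀ (by nlinarith [i.cast_nonneg (α := ℝ)]))
        · exact one_sub_inv_mul_add_one_le_rpow i.cast_nonneg hc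
    _ = ((a : ℝ) / (t + 1)) ^ ((k : ℝ) - 1)⁻¹ := by
        rw [Real.finsetProd_rpow _ _ (fun i _ => by positivity), prod_Icc_div_add_one hat]
    _ ≤ ((a : ℝ) / t) ^ ((k : ℝ) - 1)⁻¹ :=
        Real.rpow_le_rpow (by positivity) (div_add_one_le_div hat) (by positivity)

/-- For integers `k ≥ 2` and `t ≥ a ≥ 1`,
`∏_{i=a}^t (1 - 1/(ik - i + 1)) ≤ (a/t)^{1/(k-1)}`. -/
theorem prod_unchecked_le (k a t : ℕ) (hk : 2 ≤ k) (ha : 1 ≤ a) (hat : a ≤ t) :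
    (∏ i ∈ Finset.Icc a t, (1 - 1 / ((i:ℝ) * (k:ℝ) - (i:ℝ) + 1))) ≤
      ((a:ℝ) / (t:ℝ)) ^ ((1:ℝ) / ((k:ℝ) - 1)) :=
  prod_unchecked_le_general k a t hk hat
end
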